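/- arXiv:2109.08629 — 2 statements merged into one kernel-verified Lean document; each statement's English description precedes it below -/
import Mathlib

section
/- Let n, r be natural numbers, Q a symmetric (r+1)×(r+1) integer matrix with block structure Q = [Q₂, q; qᵀ, u] (Q₂ the top-left r×r block, q : Fin r → ℤ the first r entries of the last column, u the bottom-right entry), where u = 2d for some integer d. Let A be an n×(r+1) integer matrix with all entries in {0,1} whose last column is zero, A₂ the matrix of its first r columns, and b : Fin n → ℤ with entries in {0,1}. Then, as functions (Fin n → ZMod 2) → ℂ, ∑ over bit vectors z : Fin (r+1) → ℤ of i^{z ⬝ᵥ (Q.mulVec z)} • e_{red₂(A.mulVec z + b)} equals 2 • ∑ over those bit vectors x : Fin r → ℤ satisfying q ⬝ᵥ x ≡ d (mod 2) of i^{x ⬝ᵥ (Q₂.mulVec x)} • e_{red₂(A₂.mulVec x + b)}. -/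
open Matrix

/-- The integer lift of a `ZMod 2` vector: a bit vector. -/
def intify {r : ℕ} (v : Fin r → ZMod 2) : Fin r → ℤ := fun k => ((v k).val : ℤ)

/-- Entrywise reduction of an integer vector modulo 2. -/
def red₂ {n : ℕ} (x : Fin n → ℤ) : Fin n → ZMod 2 := fun j => (x j : ZMod 2)

/-- The indicator function (standard basis vector) of `v : Fin n → ZMod 2`. -/
def ind {n : ℕ} (v : Fin n → ZMod 2) : (Fin n → ZMod 2) → ℂ := fun y => if y = v then 1 else 0

/-- The eighth root of unity `τ = e^{iπ/4} = √i`. -/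
noncomputable def τ : ℂ := Complex.exp (Real.pi * Complex.I / 4)

/-- The quadratic form expansion `ψ[g,Q,A,b]`:
`(τ^g / √(2^m)) • ∑_{bit vectors x} i^{xᵀ Q x} • e_{red₂(A x + b)}`. -/
noncomputable def qfe (n m : ℕ) (g : ℤ) (Q : Matrix (Fin m) (Fin m) ℤ)
    (A : Matrix (Fin n) (Fin m) ℤ) (b : Fin n → ℤ) : (Fin n → ZMod 2) → ℂ :=
  (τ ^ g / (Real.sqrt (2 ^ m) : ℂ)) •
    ∑ v : Fin m → ZMod 2,
      (Complex.I ^ (intify v ⬝ᵥ Q.mulVec (intify v))) • ind (red₂ (A.mulVec (intify v) + b))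


lemma intify_snoc {r : ℕ} (x : Fin r → ZMod 2) (a : ZMod 2) :
    intify (Fin.snoc x a) = Fin.snoc (intify x) ((a.val : ℤ)) := by
  funext i
  refine Fin.lastCases ?_ ?_ i <;> simp [intify]

lemma snoc_quad {r : ℕ} (Q : Matrix (Fin (r+1)) (Fin (r+1)) ℤ) (hQ : Q.IsSymm)
    (y : Fin r → ℤ) (c : ℤ) :
    (Fin.snoc y c : Fin (r+1) → ℤ) ⬝ᵥ Q.mulVec (Fin.snoc y c)
      = y ⬝ᵥ (Q.submatrix Fin.castSucc Fin.castSucc).mulVec y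
        + 2 * c * ((fun k => Q (Fin.castSucc k) (Fin.last r)) ⬝ᵥ y)
        + Q (Fin.last r) (Fin.last r) * c * c := by
  have hsym : ∀ k, Q (Fin.last r) (Fin.castSucc k) = Q (Fin.castSucc k) (Fin.last r) :=
    fun k => hQ.apply _ _
  simp only [dotProduct, mulVec, Fin.sum_univ_castSucc, Fin.snoc_castSucc, Fin.snoc_last,
    submatrix_apply, hsym, mul_add, add_mul, Finset.sum_add_distrib]
  have h1 : (∑ k : Fin r, y k * (Q k.castSucc (Fin.last r) * c))
      = c * ∑ k : Fin r, Q k.castSucc (Fin.last r) * y k := by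
    rw [Finset.mul_sum]; exact Finset.sum_congr rfl fun k _ => by ring
  rw [h1]; ring

lemma snoc_mulVec {n r : ℕ} (A : Matrix (Fin n) (Fin (r+1)) ℤ)
    (hAlast : ∀ l, A l (Fin.last r) = 0) (y : Fin r → ℤ) (c : ℤ) :
    A.mulVec (Fin.snoc y c) = (A.submatrix id Fin.castSucc).mulVec y := by
  funext l
  simp [mulVec, dotProduct, Fin.sum_univ_castSucc, hAlast]

/-- Eliminating a zero column: when the bottom-right Gram coefficient is
`u = 2d`, a rank-`(r+1)` sum over bit vectors with a zero final column of `A` collapses to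
twice the rank-`r` sum restricted to bit vectors `x` with `q ⬝ x ≡ d (mod 2)`. -/
theorem qfe_zero_column_elim_even
    (n r : ℕ) (Q : Matrix (Fin (r+1)) (Fin (r+1)) ℤ) (hQ : Q.IsSymm)
    (d : ℤ) (hu : Q (Fin.last r) (Fin.last r) = 2 * d)
    (A : Matrix (Fin n) (Fin (r+1)) ℤ) (hA : ∀ l c, A l c = 0 ∨ A l c = 1)
    (hAlast : ∀ l, A l (Fin.last r) = 0)
    (b : Fin n → ℤ) (hb : ∀ l, b l = 0 ∨ b l = 1) :
    (∑ v : Fin (r+1) → ZMod 2,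
        (Complex.I ^ (intify v ⬝ᵥ Q.mulVec (intify v))) • ind (red₂ (A.mulVec (intify v) + b)))
      =
    (2 : ℂ) •
      ∑ v ∈ Finset.univ.filter
          (fun v : Fin r → ZMod 2 =>
            (fun k => Q (Fin.castSucc k) (Fin.last r)) ⬝ᵥ intify v ≡ d [ZMOD 2]),
        (Complex.I ^ (intify v ⬝ᵥ
            ((Q.submatrix Fin.castSucc Fin.castSucc).mulVec (intify v)))) •
          ind (red₂ ((A.submatrix id Fin.castSucc).mulVec (intify v) + b)) := by
  classical
  set q : Fin r → ℤ := fun k => Q (Fin.castSucc k) (Fin.last r) with hqdef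
  set F : (Fin r → ZMod 2) → (Fin n → ZMod 2) → ℂ := fun x =>
    (Complex.I ^ (intify x ⬝ᵥ ((Q.submatrix Fin.castSucc Fin.castSucc).mulVec (intify x)))) •
      ind (red₂ ((A.submatrix id Fin.castSucc).mulVec (intify x) + b)) with hF
  have key : ∀ x : Fin r → ZMod 2, ∀ a : ZMod 2,
      (Complex.I ^ (intify (Fin.snoc x a) ⬝ᵥ Q.mulVec (intify (Fin.snoc x a)))) •
        ind (red₂ (A.mulVec (intify (Fin.snoc x a)) + b))
      = (Complex.I ^ (2 * ((a.val : ℤ) * (q ⬝ᵥ intify x + d)))) • F x := by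
    intro x a
    rw [intify_snoc, snoc_quad Q hQ, snoc_mulVec A hAlast, hu, hF]
    have ha : ((a.val : ℤ)) = 0 ∨ ((a.val : ℤ)) = 1 := by have := ZMod.val_lt a; omega
    rcases ha with h | h <;>
      rw [h, smul_smul, ← zpow_add₀ Complex.I_ne_zero] <;>
      congr 2 <;> ring
  have hiff : ∀ s : ℤ, (s ≡ d [ZMOD 2]) ↔ Even (s + d) := by
    intro s; rw [Int.ModEq, Int.even_iff]; omega
  have hsum : (∑ v : Fin (r+1) → ZMod 2,
        (Complex.I ^ (intify v ⬝ᵥ Q.mulVec (intify v))) • ind (red₂ (A.mulVec (intify v) + b)))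
      = ∑ x : Fin r → ZMod 2, ∑ a : ZMod 2,
        (Complex.I ^ (2 * ((a.val : ℤ) * (q ⬝ᵥ intify x + d)))) • F x := by
    rw [← Equiv.sum_comp (Fin.snocEquiv (fun _ => ZMod 2))
      (fun v => (Complex.I ^ (intify v ⬝ᵥ Q.mulVec (intify v))) •
        ind (red₂ (A.mulVec (intify v) + b))), Fintype.sum_prod_type, Finset.sum_comm]
    refine Finset.sum_congr rfl fun x _ => Finset.sum_congr rfl fun a _ => ?_
    exact key x a
  have h2 : ∀ x : Fin r → ZMod 2,
      (∑ a : ZMod 2, (Complex.I ^ (2 * ((a.val : ℤ) * (q ⬝ᵥ intify x + d)))) • F x)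
      = (if q ⬝ᵥ intify x ≡ d [ZMOD 2] then (2:ℂ) • F x else 0) := by
    intro x
    have huniv : (Finset.univ : Finset (ZMod 2)) = {0, 1} := by decide
    rw [huniv, Finset.sum_insert (by decide), Finset.sum_singleton]
    have h0 : (((0 : ZMod 2).val : ℤ)) = 0 := by decide
    have h1 : (((1 : ZMod 2).val : ℤ)) = 1 := by decide
    rw [h0, h1]
    simp only [mul_zero, zero_mul, zpow_zero, one_smul, one_mul]
    have hI : Complex.I ^ (2 * (q ⬝ᵥ intify x + d)) = (-1 : ℂ) ^ (q ⬝ᵥ intify x + d) := by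
      rw [_root_.zpow_mul, show ((2:ℤ)) = ((2:ℕ):ℤ) from rfl, zpow_natCast]
      norm_num [Complex.I_sq]
    rw [hI]
    by_cases hc : q ⬝ᵥ intify x ≡ d [ZMOD 2]
    · rw [if_pos hc, Even.neg_one_zpow ((hiff _).1 hc), one_smul, two_smul]
    · rw [if_neg hc, Odd.neg_one_zpow (Int.not_even_iff_odd.1 (fun h => hc ((hiff _).2 h))),
        neg_one_smul, add_neg_cancel]
  calc (∑ v : Fin (r+1) → ZMod 2,
        (Complex.I ^ (intify v ⬝ᵥ Q.mulVec (intify v))) • ind (red₂ (A.mulVec (intify v) + b)))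
      = ∑ x : Fin r → ZMod 2,
          (if q ⬝ᵥ intify x ≡ d [ZMOD 2] then (2:ℂ) • F x else 0) := by
        rw [hsum]; exact Finset.sum_congr rfl fun x _ => h2 x
    _ = ∑ x ∈ Finset.univ.filter (fun x : Fin r → ZMod 2 => q ⬝ᵥ intify x ≡ d [ZMOD 2]),
          (2:ℂ) • F x := (Finset.sum_filter _ _).symm
    _ = (2:ℂ) • ∑ x ∈ Finset.univ.filter (fun x : Fin r → ZMod 2 => q ⬝ᵥ intify x ≡ d [ZMOD 2]),
          F x := Finset.smul_sum.symm
    _ = _ := rfl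
end

section
/- Let n, r be natural numbers, g : ℤ, Q a symmetric r×r integer matrix, A an n×r integer matrix with all entries in {0,1}, b : Fin n → ℤ with entries in {0,1}, j : Fin n, and β ∈ {0,1} ⊆ ℤ. Define the Y-basis projector P on functions f : (Fin n → ZMod 2) → ℂ by (P f)(y) = (1/2) · ∑_{k∈{0,1}} i^{(2β+1)·((y j).val − k)} · f(Function.update y j k). Let ã : Fin (r+1) → ℤ be row j of A extended by a final entry 0; let A'' be the n×(r+1) integer matrix whose first r columns are those of A except that row j is replaced by zero, and whose last column is the standard basis vector e_j; let b' equal b except that its j-th entry is 0; and let Q^{(Y)} be the (r+1)×(r+1) matrix obtained by extending Q with a zero last row and column and adding (2·b_j + 2·β − 1) • (ã * ãᵀ) + (2β+1) • (e_{last} * e_{last}ᵀ), where e_{last} : Fin (r+1) → ℤ is the last standard basis vector and v * wᵀ denotes the outer product. Then Real.sqrt 2 • (P ψ[g,Q,A,b]) = ψ[g − (4β+2)·b_j, Q^{(Y)}, A'', b'] (the right-hand side being a rank-(r+1) quadratic form expansion with normalisation 1/√(2^{r+1})). -/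
open Matrix

/-!
In `ψ (update y j k)` only the bit vectors `x` with `(A x + b)_j = k` contribute, so the
projector collapses the sum over `k` to the phase `i^{(2β+1)(y_j - (A x + b)_j mod 2)}` and
leaves the constraint that `A x + b` agree with `y` off `j`. On the right-hand side the new
last bit of the expansion plays the role of `y_j`, and the phase is recovered from the quadratic
form modulo 4, using `a² mod 4 = a mod 2` for `a = (A x)_j`; the remaining `i^{-(2β+1) b_j}`
is absorbed into `τ^g` because `τ² = i`.
-/

open Complex in
theorem Complex.I_zpow_congr {a b : ℤ} (h : a ≡ b [ZMOD 4]) : I ^ a = I ^ b := by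
  rw [I_zpow_eq_zpow_mod a, I_zpow_eq_zpow_mod b, h]

theorem τ_zpow_sub_two_mul (g k : ℤ) : τ ^ (g - 2 * k) = τ ^ g * Complex.I ^ (-k) := by
  have hτ : τ ^ (2 : ℤ) = Complex.I := by
    rw [τ, ← Complex.exp_int_mul]
    convert Complex.exp_pi_div_two_mul_I using 2
    push_cast
    ring
  have hτ0 : τ ≠ 0 := Complex.exp_ne_zero _
  rw [sub_eq_add_neg, ← mul_neg, zpow_add₀ hτ0, _root_.zpow_mul, hτ]

theorem sqrt_two_mul_half_mul_div_sqrt_two_pow (z : ℂ) (r : ℕ) :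
    (Real.sqrt 2 : ℂ) * ((1 / 2) * (z / (Real.sqrt (2 ^ r) : ℂ))) =
      z / (Real.sqrt (2 ^ (r + 1)) : ℂ) := by
  have h2 : (Real.sqrt 2 : ℂ) ^ 2 = 2 := by
    rw [← Complex.ofReal_pow, Real.sq_sqrt zero_le_two]; norm_num
  rw [pow_succ, Real.sqrt_mul (by positivity), Complex.ofReal_mul]
  have : (Real.sqrt 2 : ℂ) ≠ 0 := by norm_num
  have : (Real.sqrt (2 ^ r) : ℂ) ≠ 0 := by norm_num [Real.sqrt_eq_zero']
  field_simp
  linear_combination z * h2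

theorem phase_congr_mod_four (a b β m : ℤ) (hb : b = 0 ∨ b = 1) (hβ : β = 0 ∨ β = 1)
    (hm : m = 0 ∨ m = 1) :
    (2 * β + 1) * (m - (a + b) % 2) ≡
      (2 * b + 2 * β - 1) * a ^ 2 + (2 * β + 1) * m ^ 2 - (2 * β + 1) * b [ZMOD 4] := by
  have ha : a % 2 = 0 ∧ a ^ 2 % 4 = 0 ∨ a % 2 = 1 ∧ a ^ 2 % 4 = 1 := by
    rcases Int.even_or_odd' a with ⟨u, rfl | rfl⟩ <;> ring_nf <;> omega
  generalize a ^ 2 = s at *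
  unfold Int.ModEq
  rcases hβ with rfl | rfl <;> rcases hb with rfl | rfl <;> rcases hm with rfl | rfl <;> omega

theorem I_zpow_measY_phase (q a b β m : ℤ) (hb : b = 0 ∨ b = 1) (hβ : β = 0 ∨ β = 1)
    (hm : m = 0 ∨ m = 1) :
    Complex.I ^ q * Complex.I ^ ((2 * β + 1) * (m - (a + b) % 2)) =
      Complex.I ^ (-((2 * β + 1) * b)) *
        Complex.I ^ (q + (2 * b + 2 * β - 1) * a ^ 2 + (2 * β + 1) * m ^ 2) := by
  rw [← zpow_add₀ Complex.I_ne_zero, ← zpow_add₀ Complex.I_ne_zero]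
  apply Complex.I_zpow_congr
  convert (phase_congr_mod_four a b β m hb hβ hm).add_left q using 1
  ring

section Snoc

variable {R : Type*} {r : ℕ}

theorem Fin.snoc_dotProduct_snoc [NonUnitalNonAssocSemiring R] (u x : Fin r → R) (a k : R) :
    (Fin.snoc u a : Fin (r + 1) → R) ⬝ᵥ Fin.snoc x k = u ⬝ᵥ x + a * k := by
  simp [dotProduct, Fin.sum_univ_castSucc]

theorem Fin.snoc_zero_one [Zero R] [One R] :
    (Fin.snoc 0 1 : Fin (r + 1) → R) = fun k => if k = Fin.last r then 1 else 0 := by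
  funext k
  induction k using Fin.lastCases <;> simp [Fin.castSucc_ne_last]

theorem Matrix.of_snoc_mulVec_snoc [NonUnitalNonAssocSemiring R]
    (Q : Matrix (Fin r) (Fin r) R) (x : Fin r → R) (k : R) :
    Matrix.of (Fin.snoc (fun i => (Fin.snoc (Q i) 0 : Fin (r + 1) → R)) 0) *ᵥ Fin.snoc x k =
      Fin.snoc (Q *ᵥ x) 0 := by
  funext i
  induction i using Fin.lastCases <;> simp [mulVec, Fin.snoc_dotProduct_snoc]

theorem Matrix.dotProduct_vecMulVec_mulVec [CommSemiring R] {m : Type*} [Fintype m]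
    (u v w : m → R) : w ⬝ᵥ vecMulVec u v *ᵥ w = (w ⬝ᵥ u) * (v ⬝ᵥ w) := by
  simp [vecMulVec_mulVec, dotProduct_smul, mul_comm]

theorem Fin.sum_pi_snoc {M α : Type*} [AddCommMonoid M] [Fintype α]
    (f : (Fin (r + 1) → α) → M) :
    ∑ w, f w = ∑ v : Fin r → α, ∑ k, f (Fin.snoc v k) := by
  rw [← (Fin.snocEquiv fun _ => α).sum_comp, Fintype.sum_prod_type, Finset.sum_comm]
  rfl

end Snoc

theorem quadForm_measYGram_snoc {r : ℕ} (Q : Matrix (Fin r) (Fin r) ℤ) (a : Fin r → ℤ)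
    (s t : ℤ) (x : Fin r → ℤ) (k : ℤ) :
    (Fin.snoc x k : Fin (r + 1) → ℤ) ⬝ᵥ
        (Matrix.of (Fin.snoc (fun i => (Fin.snoc (Q i) 0 : Fin (r + 1) → ℤ)) 0)
          + s • vecMulVec (Fin.snoc a 0) (Fin.snoc a 0)
          + t • vecMulVec (fun i => if i = Fin.last r then (1 : ℤ) else 0)
              (fun i => if i = Fin.last r then 1 else 0)) *ᵥ Fin.snoc x k =
      x ⬝ᵥ Q *ᵥ x + s * (a ⬝ᵥ x) ^ 2 + t * k ^ 2 := by
  simp only [← Fin.snoc_zero_one, add_mulVec, smul_mulVec, dotProduct_add, dotProduct_smul,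
    Matrix.of_snoc_mulVec_snoc, Matrix.dotProduct_vecMulVec_mulVec, Fin.snoc_dotProduct_snoc]
  simp only [dotProduct_comm x a, smul_eq_mul, dotProduct_zero, zero_dotProduct]
  ring

theorem intify_snoc_s16 {r : ℕ} (v : Fin r → ZMod 2) (k : ZMod 2) :
    intify (Fin.snoc v k : Fin (r + 1) → ZMod 2) = Fin.snoc (intify v) (k.val : ℤ) := by
  funext i
  induction i using Fin.lastCases <;> simp [intify]

theorem red₂_measYMatrix_mulVec_snoc {n r : ℕ} (A : Matrix (Fin n) (Fin r) ℤ)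
    (b : Fin n → ℤ) (j : Fin n) (x : Fin r → ℤ) (k : ZMod 2) :
    red₂ ((Matrix.of fun l => Fin.snoc (fun c => if l = j then 0 else A l c)
          (if l = j then 1 else 0)) *ᵥ Fin.snoc x (k.val : ℤ) + Function.update b j 0) =
      Function.update (red₂ (A *ᵥ x + b)) j k := by
  funext l
  by_cases hl : l = j
  · subst hl
    simp [red₂, mulVec, Fin.snoc_dotProduct_snoc]
  · simp [red₂, mulVec, Fin.snoc_dotProduct_snoc, hl]

section Indicator

variable {n : ℕ} (c y : Fin n → ZMod 2) (j : Fin n) (k : ZMod 2)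

theorem ind_apply_update :
    ind c (Function.update y j k) = if k = c j then ind y (Function.update c j (y j)) else 0 := by
  simp only [ind, Function.update_eq_iff]
  grind

theorem ind_update_apply :
    ind (Function.update c j k) y = if k = y j then ind y (Function.update c j (y j)) else 0 := by
  simp only [ind, Function.update_eq_iff, Function.eq_update_iff]
  grind

end Indicator

theorem qfe_apply (n m : ℕ) (g : ℤ) (Q : Matrix (Fin m) (Fin m) ℤ)
    (A : Matrix (Fin n) (Fin m) ℤ) (b : Fin n → ℤ) (y : Fin n → ZMod 2) :
    qfe n m g Q A b y = τ ^ g / (Real.sqrt (2 ^ m) : ℂ) *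
      ∑ v, Complex.I ^ (intify v ⬝ᵥ Q *ᵥ intify v) *
        ind (red₂ (A *ᵥ intify v + b)) y := by
  simp [qfe, Finset.sum_apply]

theorem qfe_measY_general
    (n r : ℕ) (g : ℤ) (Q : Matrix (Fin r) (Fin r) ℤ)
    (A : Matrix (Fin n) (Fin r) ℤ)
    (b : Fin n → ℤ) (hb : ∀ l, b l = 0 ∨ b l = 1)
    (j : Fin n) (β : ℤ) (hβ : β = 0 ∨ β = 1) :
    (fun y => (Real.sqrt 2 : ℂ) * ((1 / 2 : ℂ) *
        ∑ k : ZMod 2, Complex.I ^ ((2 * β + 1) * (((y j).val : ℤ) - (k.val : ℤ))) *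
          qfe n r g Q A b (Function.update y j k)))
      = qfe n (r + 1) (g - (4 * β + 2) * b j)
          -- Q⁽ʸ⁾ : extend Q by a zero last row and column, then add the rank-one updates
          (Matrix.of (Fin.snoc (fun k => (Fin.snoc (Q k) 0 : Fin (r+1) → ℤ)) (0 : Fin (r+1) → ℤ))
            + (2 * b j + 2 * β - 1) •
                Matrix.vecMulVec (Fin.snoc (fun k => A j k) 0) (Fin.snoc (fun k => A j k) 0)
            + (2 * β + 1) •
                Matrix.vecMulVec (fun k => if k = Fin.last r then (1 : ℤ) else 0)
                  (fun k => if k = Fin.last r then 1 else 0))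
          -- A'' : first r columns of A with row j zeroed, last column e_j
          (Matrix.of fun l => Fin.snoc (fun c => if l = j then 0 else A l c)
              (if l = j then 1 else 0))
          -- b' : b with entry j set to 0
          (Function.update b j 0) := by
  funext y
  -- Pinning `y` keeps the two indicator rewrites from firing again on their own results.
  simp only [qfe_apply, ind_apply_update (y := y), ind_update_apply (y := y), Fin.sum_pi_snoc,
    intify_snoc_s16, quadForm_measYGram_snoc, red₂_measYMatrix_mulVec_snoc, Finset.mul_sum,
    mul_ite, mul_zero]
  rw [Finset.sum_comm]
  simp only [Finset.sum_ite_eq', Finset.mem_univ, if_true]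
  refine Finset.sum_congr rfl fun v _ => ?_
  have hm : ((y j).val : ℤ) = 0 ∨ ((y j).val : ℤ) = 1 := by
    have := ZMod.val_lt (y j); omega
  have hcj : ((red₂ (A *ᵥ intify v + b) j).val : ℤ) = ((fun k => A j k) ⬝ᵥ intify v + b j) % 2 :=
    ZMod.val_intCast _
  rw [show g - (4 * β + 2) * b j = g - 2 * ((2 * β + 1) * b j) by ring, τ_zpow_sub_two_mul,
    ← sqrt_two_mul_half_mul_div_sqrt_two_pow, hcj]
  generalize ind y _ = e
  linear_combination (Real.sqrt 2 : ℂ) * (1 / 2) * (τ ^ g / (Real.sqrt (2 ^ r) : ℂ)) * e *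
    I_zpow_measY_phase (intify v ⬝ᵥ Q *ᵥ intify v) _ _ _ _ (hb j) hβ hm

/-- The `Y`-basis projector onto outcome `β` on qubit `j` maps a rank-`r`
quadratic form expansion (times `√2`) to the rank-`(r+1)` expansion with `g ↦ g - (4β+2)b_j`,
Gram matrix extended by a zero row/column plus `(2b_j + 2β - 1)·ã ãᵀ + (2β+1)·e_last e_lastᵀ`,
row `j` of `A` zeroed with new column `e_j`, and `b_j ↦ 0`. -/
theorem qfe_measY
    (n r : ℕ) (g : ℤ) (Q : Matrix (Fin r) (Fin r) ℤ) (hQ : Q.IsSymm)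
    (A : Matrix (Fin n) (Fin r) ℤ) (hA : ∀ l c, A l c = 0 ∨ A l c = 1)
    (b : Fin n → ℤ) (hb : ∀ l, b l = 0 ∨ b l = 1)
    (j : Fin n) (β : ℤ) (hβ : β = 0 ∨ β = 1) :
    (fun y => (Real.sqrt 2 : ℂ) * ((1 / 2 : ℂ) *
        ∑ k : ZMod 2, Complex.I ^ ((2 * β + 1) * (((y j).val : ℤ) - (k.val : ℤ))) *
          qfe n r g Q A b (Function.update y j k)))
      = qfe n (r + 1) (g - (4 * β + 2) * b j)
          -- Q⁽ʸ⁾ : extend Q by a zero last row and column, then add the rank-one updates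
          (Matrix.of (Fin.snoc (fun k => (Fin.snoc (Q k) 0 : Fin (r+1) → ℤ)) (0 : Fin (r+1) → ℤ))
            + (2 * b j + 2 * β - 1) •
                Matrix.vecMulVec (Fin.snoc (fun k => A j k) 0) (Fin.snoc (fun k => A j k) 0)
            + (2 * β + 1) •
                Matrix.vecMulVec (fun k => if k = Fin.last r then (1 : ℤ) else 0)
                  (fun k => if k = Fin.last r then 1 else 0))
          -- A'' : first r columns of A with row j zeroed, last column e_j
          (Matrix.of fun l => Fin.snoc (fun c => if l = j then 0 else A l c)
              (if l = j then 1 else 0))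
          -- b' : b with entry j set to 0
          (Function.update b j 0) :=
  qfe_measY_general n r g Q A b hb j β hβ
end
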